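/- arXiv:1302.5072 — 7 statements merged into one kernel-verified Lean document; each statement's English description precedes it below -/
import Mathlib

section
/- Let X, Y be Hilbert spaces, B : X → Y' an isomorphism with bilinear form b(q,v) := ⟨Bq,v⟩, R_Y the Riesz map of Y, f ∈ Y', and let W ⊆ X, V ⊆ Y be closed subspaces. Suppose (u, p) ∈ V × W solves the saddle point problem: (u, v)_Y + b(p, v) = ⟨f, v⟩ for all v ∈ V, and b(q, u) = 0 for all q ∈ W. Then p solves the Petrov–Galerkin problem b(p, ṽ) = ⟨f, ṽ⟩ for all ṽ ∈ P_V(R_Y⁻¹ B W), where P_V is the Y-orthogonal projection onto V. -/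
open InnerProductSpace NormedSpace RealInnerProductSpace

theorem statement5 {X Y : Type*}
    [NormedAddCommGroup X] [InnerProductSpace ℝ X] [CompleteSpace X]
    [NormedAddCommGroup Y] [InnerProductSpace ℝ Y] [CompleteSpace Y]
    (B : X →L[ℝ] StrongDual ℝ Y) (f : StrongDual ℝ Y)
    (W : Submodule ℝ X) (V : Submodule ℝ Y) [Submodule.HasOrthogonalProjection V]
    (u : Y) (p : X) (hu : u ∈ V) (hp : p ∈ W)
    (h1 : ∀ v ∈ V, ⟪u, v⟫ + (B p) v = f v)
    (h2 : ∀ q ∈ W, (B q) u = 0) :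
    ∀ q ∈ W,
      (B p) ((Submodule.orthogonalProjectionOnto V ((toDual ℝ Y).symm (B q)) : Y))
        = f ((Submodule.orthogonalProjectionOnto V ((toDual ℝ Y).symm (B q)) : Y)) := by
  intro q hq
  set w := (toDual ℝ Y).symm (B q) with hw
  have hv := h1 _ (Submodule.orthogonalProjectionOnto V w).2
  have hz : ⟪u, (Submodule.orthogonalProjectionOnto V w : Y)⟫ = 0 := by
    rw [← Submodule.starProjection_apply, ← Submodule.inner_starProjection_left_eq_right,
      Submodule.starProjection_eq_self_iff.mpr hu]
    rw [real_inner_comm, hw, toDual_symm_apply]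
    exact h2 q hq
  linarith [hv]
end

section
/- Let X, Y be Hilbert spaces, B : X → Y' an isomorphism, f ∈ Y', p := B⁻¹f, and endow X with ‖q‖_X̂ := ‖Bq‖_{Y'}. Let W ⊆ X, V ⊆ Y be closed subspaces such that V is δ-proximal for W for some δ ∈ [0,1), i.e. ‖(I − P_V) R_Y⁻¹ B q‖_Y ≤ δ ‖R_Y⁻¹ B q‖_Y for all q ∈ W. If (u_{V,W}, p_{W,V}) ∈ V × W solves the saddle point problem (u,v)_Y + ⟨B p, v⟩ = ⟨f,v⟩ for v ∈ V and ⟨B q, u⟩ = 0 for q ∈ W, then ‖p − p_{W,V}‖_X̂ ≤ (1−δ)⁻¹ inf_{q ∈ W} ‖p − q‖_X̂. -/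
open InnerProductSpace NormedSpace RealInnerProductSpace

set_option maxHeartbeats 1000000 in
theorem statement6 {X Y : Type*}
    [NormedAddCommGroup X] [InnerProductSpace ℝ X] [CompleteSpace X]
    [NormedAddCommGroup Y] [InnerProductSpace ℝ Y] [CompleteSpace Y]
    (B : X ≃L[ℝ] StrongDual ℝ Y) (f : StrongDual ℝ Y)
    (W : Submodule ℝ X) (V : Submodule ℝ Y) [V.HasOrthogonalProjection]
    (δ : ℝ) (hδ0 : 0 ≤ δ) (hδ1 : δ < 1)
    (hprox : ∀ q ∈ W,
      ‖(toDual ℝ Y).symm (B q) - (V.orthogonalProjectionOnto ((toDual ℝ Y).symm (B q)) : Y)‖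
        ≤ δ * ‖(toDual ℝ Y).symm (B q)‖)
    (u : Y) (pWV : X) (hu : u ∈ V) (hpWV : pWV ∈ W)
    (h1 : ∀ v ∈ V, ⟪u, v⟫ + (B pWV) v = f v)
    (h2 : ∀ q ∈ W, (B q) u = 0) :
    ‖B (B.symm f - pWV)‖ ≤ (1 - δ)⁻¹ * ⨅ q : W, ‖B (B.symm f - (q : X))‖ := by
  have hδ : (0:ℝ) < 1 - δ := by linarith
  have key : ∀ q ∈ W, (1 - δ) * ‖B (B.symm f - pWV)‖ ≤ ‖B (B.symm f - q)‖ := by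
    intro q hq
    set p := B.symm f with hp
    have hBp : B p = f := B.apply_symm_apply f
    set s : Y := (toDual ℝ Y).symm (B (p - pWV)) with hs
    set z : Y := (toDual ℝ Y).symm (B (p - q)) with hz
    set r : Y := (toDual ℝ Y).symm (B (q - pWV)) with hr
    have hszr : s = z + r := by
      rw [hs, hz, hr, ← map_add, ← map_add]
      congr 2
      abel
    -- s - u is orthogonal to V
    have hsv : ∀ v ∈ V, ⟪s - u, v⟫ = 0 := by
      intro v hv
      have h1v := h1 v hv
      have hsvv : ⟪s, v⟫ = (B (p - pWV)) v := toDual_symm_apply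
      have hBv : (B (p - pWV)) v = f v - (B pWV) v := by
        rw [map_sub, hBp]; simp
      rw [inner_sub_left, hsvv, hBv, real_inner_comm] at *
      linarith
    -- u ⊥ r
    have hur : ⟪u, r⟫ = 0 := by
      rw [real_inner_comm]
      have : ⟪r, u⟫ = (B (q - pWV)) u := toDual_symm_apply
      rw [this, map_sub]
      simp [h2 q hq, h2 pWV hpWV]
    -- hprox applied to r
    have hproxr : ‖r - (V.orthogonalProjectionOnto r : Y)‖ ≤ δ * ‖r‖ :=
      hprox (q - pWV) (W.sub_mem hq hpWV)
    -- ⟪s - u, r⟫ ≤ ‖s - u‖ * (δ * ‖r‖)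
    have hsur : ⟪s - u, r⟫ ≤ ‖s - u‖ * (δ * ‖r‖) := by
      have hsplit : ⟪s - u, r⟫ =
          ⟪s - u, r - (V.orthogonalProjectionOnto r : Y)⟫ +
            ⟪s - u, ((V.orthogonalProjectionOnto r : Y))⟫ := by
        rw [← inner_add_right, sub_add_cancel]
      have hzero : ⟪s - u, ((V.orthogonalProjectionOnto r : Y))⟫ = 0 :=
        hsv _ (SetLike.coe_mem _)
      calc ⟪s - u, r⟫ = ⟪s - u, r - (V.orthogonalProjectionOnto r : Y)⟫ := by
            rw [hsplit, hzero, add_zero]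
        _ ≤ ‖s - u‖ * ‖r - (V.orthogonalProjectionOnto r : Y)‖ := real_inner_le_norm _ _
        _ ≤ ‖s - u‖ * (δ * ‖r‖) := by
            exact mul_le_mul_of_nonneg_left hproxr (norm_nonneg _)
    -- ‖s - u‖ ≤ ‖s‖
    have hsu_le : ‖s - u‖ ≤ ‖s‖ := by
      have h0 : ⟪s - u, u⟫ = 0 := hsv u hu
      have hpyth := norm_add_sq_real (s - u) u
      rw [sub_add_cancel, h0] at hpyth
      nlinarith [norm_nonneg (s - u), norm_nonneg s, norm_nonneg u, sq_nonneg (‖u‖)]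
    -- ⟪s, r⟫ ≤ δ * ‖s‖ * ‖r‖
    have hsr : ⟪s, r⟫ ≤ δ * (‖s‖ * ‖r‖) := by
      have : ⟪s, r⟫ = ⟪s - u, r⟫ + ⟪u, r⟫ := by rw [← inner_add_left, sub_add_cancel]
      rw [this, hur, add_zero]
      calc ⟪s - u, r⟫ ≤ ‖s - u‖ * (δ * ‖r‖) := hsur
        _ ≤ ‖s‖ * (δ * ‖r‖) := by
            exact mul_le_mul_of_nonneg_right hsu_le
              (mul_nonneg hδ0 (norm_nonneg _))
        _ = δ * (‖s‖ * ‖r‖) := by ring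
    -- algebra
    have hzeq : r = s - z := by rw [hszr]; abel
    have hinz : ⟪s, z⟫ = ‖s‖^2 - ⟪s, r⟫ := by
      have : z = s - r := by rw [hszr]; abel
      rw [this, inner_sub_right, real_inner_self_eq_norm_sq]
    have hrsq : ‖r‖^2 = ‖s‖^2 - 2 * ⟪s, z⟫ + ‖z‖^2 := by
      rw [hzeq]; exact norm_sub_sq_real s z
    have hmain : (1 - δ) * ‖s‖ ≤ ‖z‖ := by
      nlinarith [sq_nonneg (‖r‖ - δ * ‖s‖), sq_nonneg (‖z‖ + (1 - δ) * ‖s‖),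
        norm_nonneg s, norm_nonneg z, norm_nonneg r,
        mul_nonneg hδ0 (norm_nonneg s), mul_nonneg (norm_nonneg s) (norm_nonneg z)]
    have hns : ‖s‖ = ‖B (p - pWV)‖ := (toDual ℝ Y).symm.norm_map _
    have hnz : ‖z‖ = ‖B (p - q)‖ := (toDual ℝ Y).symm.norm_map _
    rw [hns, hnz] at hmain
    exact hmain
  rw [le_inv_mul_iff₀ hδ]
  exact le_ciInf fun q => key q q.2
end

section
/- In the setting of the δ-proximal saddle point approximation (B : X → Y' isomorphism, f ∈ Y', p = B⁻¹f, V δ-proximal for W with δ ∈ [0,1), saddle point solution (u_{V,W}, p_{W,V})), the auxiliary variable satisfies ‖u_{V,W}‖_Y ≤ ‖p − p_{W,V}‖_X̂, and consequently ‖p − p_{W,V}‖_X̂ + ‖u_{V,W}‖_Y ≤ (2/(1−δ)) inf_{q∈W} ‖p − q‖_X̂. (Note that the exact saddle point solution has u = 0.) -/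
open InnerProductSpace NormedSpace RealInnerProductSpace

set_option maxHeartbeats 4000000 in
theorem statement7 {X Y : Type*}
    [NormedAddCommGroup X] [InnerProductSpace ℝ X] [CompleteSpace X]
    [NormedAddCommGroup Y] [InnerProductSpace ℝ Y] [CompleteSpace Y]
    (B : X ≃L[ℝ] StrongDual ℝ Y) (f : StrongDual ℝ Y)
    (W : Submodule ℝ X) (V : Submodule ℝ Y) [V.HasOrthogonalProjection]
    (δ : ℝ) (hδ0 : 0 ≤ δ) (hδ1 : δ < 1)
    (hprox : ∀ q ∈ W,
      ‖(toDual ℝ Y).symm (B q) - (V.orthogonalProjectionOnto ((toDual ℝ Y).symm (B q)) : Y)‖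
        ≤ δ * ‖(toDual ℝ Y).symm (B q)‖)
    (u : Y) (pWV : X) (hu : u ∈ V) (hpWV : pWV ∈ W)
    (h1 : ∀ v ∈ V, ⟪u, v⟫ + (B pWV) v = f v)
    (h2 : ∀ q ∈ W, (B q) u = 0) :
    ‖u‖ ≤ ‖B (B.symm f - pWV)‖ ∧
    ‖B (B.symm f - pWV)‖ + ‖u‖ ≤ (2 / (1 - δ)) * ⨅ q : W, ‖B (B.symm f - (q : X))‖ := by
  have h1δ : (0:ℝ) < 1 - δ := by linarith
  set p : X := B.symm f with hp
  have hBp : B p = f := B.apply_symm_apply f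
  set w : Y := (toDual ℝ Y).symm (B (p - pWV)) with hw
  have hwnorm : ‖w‖ = ‖B (p - pWV)‖ := LinearIsometryEquiv.norm_map _ _
  -- key identity: ⟪w, v⟫ = ⟪u, v⟫ for v ∈ V
  have hA : ∀ v ∈ V, ⟪w, v⟫ = ⟪u, v⟫ := by
    intro v hv
    rw [hw, toDual_symm_apply, map_sub, ContinuousLinearMap.sub_apply, hBp]
    have := h1 v hv
    linarith
  -- u is the projection of w
  have hPw : (V.orthogonalProjectionOnto w : Y) = u := by
    apply Submodule.eq_starProjection_of_mem_of_inner_eq_zero hu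
    intro v hv
    rw [inner_sub_left, hA v hv, sub_self]
  have huw : ⟪w, u⟫ = ‖u‖ ^ 2 := by
    rw [hA u hu, real_inner_self_eq_norm_sq]
  have part1 : ‖u‖ ≤ ‖w‖ := by
    nlinarith [real_inner_le_norm w u, norm_nonneg u, norm_nonneg w]
  refine ⟨by rw [← hwnorm]; exact part1, ?_⟩
  -- the per-q bound
  have key : ∀ q : W, ‖w‖ + ‖u‖ ≤ (2 / (1 - δ)) * ‖B (p - (q : X))‖ := by
    rintro ⟨q, hq⟩
    simp only
    set g : Y := (toDual ℝ Y).symm (B (p - q)) with hg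
    set z : Y := (toDual ℝ Y).symm (B (pWV - q)) with hz
    have hgnorm : ‖g‖ = ‖B (p - q)‖ := LinearIsometryEquiv.norm_map _ _
    have hwgz : w = g - z := by
      rw [hw, hg, hz, ← LinearIsometryEquiv.map_sub, ← map_sub]
      congr 2
      abel
    have hmemW : pWV - q ∈ W := sub_mem hpWV hq
    have hzu : ⟪z, u⟫ = 0 := by
      rw [hz, toDual_symm_apply]
      exact h2 _ hmemW
    have hgu : ⟪g, u⟫ = ‖u‖ ^ 2 := by
      have hh : ⟪g, u⟫ = ⟪w, u⟫ + ⟪z, u⟫ := by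
        rw [hwgz, inner_sub_left]; ring
      rw [hh, hzu, huw]; ring
    set Pg : Y := (V.orthogonalProjectionOnto g : Y) with hPg
    set Pz : Y := (V.orthogonalProjectionOnto z : Y) with hPzdef
    have hPzu : Pz = Pg - u := by
      have hzgw : z = g - w := by rw [hwgz]; abel
      rw [hPzdef, hzgw, map_sub]
      push_cast
      rw [hPw, hPg]
    have hprox' : ‖z - Pz‖ ≤ δ * ‖z‖ := hprox _ hmemW
    -- orthogonality of g - Pg to V
    have hgPg : g - Pg ∈ Vᗮ := Submodule.sub_starProjection_mem_orthogonal g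
    have hPgu : ⟪Pg, u⟫ = ‖u‖ ^ 2 := by
      have h0 : ⟪u, g - Pg⟫ = 0 := hgPg u hu
      have h0' : ⟪g - Pg, u⟫ = 0 := by rw [real_inner_comm]; exact h0
      rw [inner_sub_left] at h0'
      rw [← hgu]; linarith
    have hPzsq : ‖Pz‖ ^ 2 = ‖Pg‖ ^ 2 - ‖u‖ ^ 2 := by
      have hPzuin : ⟪Pz, u⟫ = 0 := by
        rw [hPzu, inner_sub_left, hPgu, real_inner_self_eq_norm_sq]; ring
      have hdecomp : Pg = Pz + u := by rw [hPzu]; abel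
      have := norm_add_sq_real Pz u
      rw [hPzuin] at this
      rw [hdecomp]
      linarith [this]
    have hgsq : ‖g‖ ^ 2 = ‖Pg‖ ^ 2 + ‖g - Pg‖ ^ 2 := by
      have hPgmem : Pg ∈ V := (V.orthogonalProjectionOnto g).2
      have h0 : ⟪Pg, g - Pg⟫ = 0 := hgPg Pg hPgmem
      have hdecomp : g = Pg + (g - Pg) := by abel
      have := norm_add_sq_real Pg (g - Pg)
      rw [h0, ← hdecomp] at this
      linarith
    have hwusq : ‖w‖ ^ 2 = ‖u‖ ^ 2 + ‖w - u‖ ^ 2 := by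
      have h0 : ⟪u, w - u⟫ = 0 := by
        rw [inner_sub_right, real_inner_self_eq_norm_sq, real_inner_comm, huw]; ring
      have hdecomp : w = u + (w - u) := by abel
      have := norm_add_sq_real u (w - u)
      rw [h0, ← hdecomp] at this
      linarith
    have hwudecomp : w - u = (g - Pg) - (z - Pz) := by
      rw [hwgz, hPzu]; abel
    have hwu_le : ‖w - u‖ ≤ ‖g - Pg‖ + ‖z - Pz‖ := by
      rw [hwudecomp]; exact norm_sub_le _ _
    have hZ : (1 - δ) * ‖z‖ ≤ ‖Pz‖ := by
      have htri : ‖z‖ ≤ ‖Pz‖ + ‖z - Pz‖ := by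
        have : z = Pz + (z - Pz) := by abel
        calc ‖z‖ = ‖Pz + (z - Pz)‖ := by rw [← this]
          _ ≤ ‖Pz‖ + ‖z - Pz‖ := norm_add_le _ _
      linarith
    -- numeric part
    set c : ℝ := δ / (1 - δ) with hc
    have hc0 : 0 ≤ c := div_nonneg hδ0 (le_of_lt h1δ)
    have hcδ : δ * ‖z‖ ≤ c * ‖Pz‖ := by
      rw [hc, div_mul_eq_mul_div, le_div_iff₀ h1δ]
      nlinarith [hZ, norm_nonneg z]
    have h2c : 2 / (1 - δ) = 2 * (1 + c) := by
      rw [hc]; field_simp; ring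
    have ha_le_g : ‖u‖ ≤ ‖g‖ := by
      nlinarith [real_inner_le_norm g u, norm_nonneg u, norm_nonneg g, hgu]
    have hwu2 : ‖w - u‖ ≤ ‖g - Pg‖ + c * ‖Pz‖ := le_trans hwu_le (by linarith [hprox', hcδ])
    have hCS : (‖g - Pg‖ + c * ‖Pz‖) ^ 2 ≤ (1 + c ^ 2) * (‖g - Pg‖ ^ 2 + ‖Pz‖ ^ 2) := by
      nlinarith [sq_nonneg (c * ‖g - Pg‖ - ‖Pz‖)]
    have hwsq_le : ‖w‖ ^ 2 ≤ (1 + c) ^ 2 * ‖g‖ ^ 2 := by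
      have h3 : ‖w - u‖ ^ 2 ≤ (‖g - Pg‖ + c * ‖Pz‖) ^ 2 := by
        have hnn : 0 ≤ ‖w - u‖ := norm_nonneg _
        nlinarith [hwu2]
      have e2 : ‖g - Pg‖ ^ 2 + ‖Pz‖ ^ 2 = ‖g‖ ^ 2 - ‖u‖ ^ 2 := by
        linarith [hPzsq, hgsq]
      have e1 : ‖w - u‖ ^ 2 ≤ (1 + c ^ 2) * (‖g‖ ^ 2 - ‖u‖ ^ 2) := by
        rw [← e2]; exact le_trans h3 hCS
      nlinarith [mul_nonneg hc0 (sq_nonneg ‖g‖),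
        mul_nonneg (mul_nonneg hc0 hc0) (sq_nonneg ‖u‖), hwusq, e1]
    have hw_le : ‖w‖ ≤ (1 + c) * ‖g‖ := by
      have h1c : 0 ≤ (1 + c) * ‖g‖ := mul_nonneg (by linarith) (norm_nonneg g)
      nlinarith [norm_nonneg w]
    rw [h2c, ← hgnorm]
    nlinarith [ha_le_g, hw_le, hc0, norm_nonneg g]
  -- pass to the infimum
  have hC : (0:ℝ) < 2 / (1 - δ) := by positivity
  have hInf : (‖w‖ + ‖u‖) / (2 / (1 - δ)) ≤ ⨅ q : W, ‖B (p - (q : X))‖ := by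
    have : Nonempty W := ⟨0⟩
    apply le_ciInf
    intro q
    rw [div_le_iff₀ hC, mul_comm]
    exact key q
  rw [← hwnorm]
  rw [div_le_iff₀ hC] at hInf
  linarith [hInf]
end

section
/- Let X, Y be Hilbert spaces, B : X → Y' an isomorphism, and W ⊆ X, V ⊆ Y closed subspaces. If V is δ-proximal for W with δ ∈ [0,1), i.e. ‖(I − P_V) R_Y⁻¹ B q‖_Y ≤ δ ‖R_Y⁻¹ B q‖_Y for all q ∈ W, then the discrete inf-sup condition inf_{q ∈ W, q≠0} sup_{v ∈ V, v≠0} ⟨Bq, v⟩ / (‖v‖_Y ‖q‖_X̂) ≥ √(1−δ²) holds, where ‖q‖_X̂ := ‖Bq‖_{Y'}. -/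
open InnerProductSpace NormedSpace RealInnerProductSpace

theorem statement8 {X Y : Type*}
    [NormedAddCommGroup X] [InnerProductSpace ℝ X] [CompleteSpace X]
    [NormedAddCommGroup Y] [InnerProductSpace ℝ Y] [CompleteSpace Y]
    (B : X ≃L[ℝ] StrongDual ℝ Y)
    (W : Submodule ℝ X) (V : Submodule ℝ Y) [Submodule.HasOrthogonalProjection V]
    (δ : ℝ) (hδ0 : 0 ≤ δ) (hδ1 : δ < 1)
    (hprox : ∀ q ∈ W,
      ‖(toDual ℝ Y).symm (B q) - (Submodule.orthogonalProjectionOnto V ((toDual ℝ Y).symm (B q)) : Y)‖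
        ≤ δ * ‖(toDual ℝ Y).symm (B q)‖) :
    ∀ q ∈ W,
      Real.sqrt (1 - δ ^ 2) * ‖B q‖
        ≤ ⨆ v : {v : V // (v : Y) ≠ 0}, (B q) (v.1 : Y) / ‖(v.1 : Y)‖ := by
  intro q hq
  set u : Y := (toDual ℝ Y).symm (B q) with hu
  have hBu : ∀ v : Y, (B q) v = ⟪u, v⟫ := by
    intro v
    have h : B q = toDual ℝ Y u := ((toDual ℝ Y).apply_symm_apply (B q)).symm
    rw [h, toDual_apply_apply]
  have hnorm : ‖B q‖ = ‖u‖ := ((toDual ℝ Y).symm.norm_map (B q)).symm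
  set p : Y := (Submodule.orthogonalProjectionOnto V u : Y) with hp
  have hp_mem : p ∈ V := (Submodule.orthogonalProjectionOnto V u).2
  have horth : ⟪u - p, p⟫ = 0 := Submodule.starProjection_inner_eq_zero u p hp_mem
  have hip : ⟪u, p⟫ = ‖p‖ ^ 2 := by
    rw [inner_sub_left] at horth
    have h2 : ⟪p, p⟫_ℝ = (‖p‖ : ℝ) ^ 2 := real_inner_self_eq_norm_sq p
    linarith
  have horth2 : ⟪u - p, p⟫ = 0 := Submodule.starProjection_inner_eq_zero u p hp_mem
  have hpyth : ‖u‖ ^ 2 = ‖u - p‖ ^ 2 + ‖p‖ ^ 2 := by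
    have h := norm_add_sq_real (u - p) p
    rw [sub_add_cancel, horth2] at h
    linarith
  have hprox' : ‖u - p‖ ≤ δ * ‖u‖ := hprox q hq
  have hsq : (1 - δ ^ 2) * ‖u‖ ^ 2 ≤ ‖p‖ ^ 2 := by
    have h1 : ‖u - p‖ ^ 2 ≤ (δ * ‖u‖) ^ 2 := by
      have := mul_self_le_mul_self (norm_nonneg _) hprox'
      nlinarith
    nlinarith
  have hδsq : (0:ℝ) ≤ 1 - δ ^ 2 := by nlinarith
  by_cases hu0 : u = 0
  · have hB0 : ‖B q‖ = 0 := by rw [hnorm, hu0, norm_zero]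
    rw [hB0, mul_zero]
    apply Real.iSup_nonneg
    intro v
    have : (B q) (v.1 : Y) = 0 := by rw [hBu, hu0, inner_zero_left]
    rw [this, zero_div]
  · have hu_pos : 0 < ‖u‖ := norm_pos_iff.mpr hu0
    have hp_pos : 0 < ‖p‖ ^ 2 := by
      have h1 : (0:ℝ) < 1 - δ ^ 2 := by nlinarith
      have h2 : (0:ℝ) < ‖u‖ ^ 2 := by positivity
      nlinarith
    have hp_ne : p ≠ 0 := by
      intro h
      rw [h, norm_zero] at hp_pos
      simp at hp_pos
    have hbdd : BddAbove (Set.range fun v : {v : V // (v : Y) ≠ 0} =>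
        (B q) (v.1 : Y) / ‖(v.1 : Y)‖) := by
      refine ⟨‖B q‖, ?_⟩
      rintro _ ⟨v, rfl⟩
      have hv_pos : 0 < ‖(v.1 : Y)‖ := norm_pos_iff.mpr v.2
      rw [div_le_iff₀ hv_pos]
      calc (B q) (v.1 : Y) ≤ ‖(B q) (v.1 : Y)‖ := Real.le_norm_self _
        _ ≤ ‖B q‖ * ‖(v.1 : Y)‖ := (B q).le_opNorm _
    have key : Real.sqrt (1 - δ ^ 2) * ‖B q‖ ≤
        (B q) ((⟨⟨p, hp_mem⟩, hp_ne⟩ : {v : V // (v : Y) ≠ 0}).1 : Y) /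
          ‖((⟨⟨p, hp_mem⟩, hp_ne⟩ : {v : V // (v : Y) ≠ 0}).1 : Y)‖ := by
      have hpn : 0 < ‖p‖ := norm_pos_iff.mpr hp_ne
      have hval : (B q) p / ‖p‖ = ‖p‖ := by
        rw [hBu, hip]
        field_simp
      show Real.sqrt (1 - δ ^ 2) * ‖B q‖ ≤ (B q) p / ‖p‖
      rw [hval, hnorm]
      have h1 : Real.sqrt (1 - δ ^ 2) * ‖u‖ = Real.sqrt ((1 - δ ^ 2) * ‖u‖ ^ 2) := by
        rw [Real.sqrt_mul hδsq, Real.sqrt_sq (norm_nonneg u)]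
      rw [h1]
      calc Real.sqrt ((1 - δ ^ 2) * ‖u‖ ^ 2) ≤ Real.sqrt (‖p‖ ^ 2) :=
            Real.sqrt_le_sqrt hsq
        _ = ‖p‖ := Real.sqrt_sq (norm_nonneg p)
    exact key.trans (le_ciSup hbdd _)
end

section
/- Let X, Y be Hilbert spaces, B : X → Y' bounded, R_Y the Riesz map of Y, and let V ⊆ Y be a closed subspace. Suppose that for some δ ∈ [0,1) and a subset S ⊆ X one has inf_{v ∈ V} ‖R_Y⁻¹Bq − v‖_Y ≤ δ‖R_Y⁻¹Bq‖_Y for all q ∈ S. Then for all q ∈ S: √(1−δ²) ‖Bq‖_{Y'} ≤ ‖P_V R_Y⁻¹ B q‖_Y ≤ ‖Bq‖_{Y'}. In particular, if f ∈ Y' and p ∈ W ⊆ X with B⁻¹f − p ∈ S (e.g. S = M + W closed under such differences), the computable quantity ‖P_V R_Y⁻¹(f − Bp)‖_Y sandwiches the dual residual norm ‖f − Bp‖_{Y'} up to the factor √(1−δ²). -/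
open InnerProductSpace NormedSpace RealInnerProductSpace

lemma core_lemma {Y : Type*}
    [NormedAddCommGroup Y] [InnerProductSpace ℝ Y] [CompleteSpace Y]
    (V : Submodule ℝ Y) [V.HasOrthogonalProjection]
    (δ : ℝ) (hδ0 : 0 ≤ δ) (w : Y)
    (h : (⨅ v : V, ‖w - (v : Y)‖) ≤ δ * ‖w‖) :
    Real.sqrt (1 - δ ^ 2) * ‖w‖ ≤ ‖(V.orthogonalProjectionOnto w : Y)‖ ∧
    ‖(V.orthogonalProjectionOnto w : Y)‖ ≤ ‖w‖ := by
  set P : Y := (V.orthogonalProjectionOnto w : Y)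
  have hmin : ‖w - P‖ ≤ δ * ‖w‖ := by
    rw [show ‖w - P‖ = ⨅ v : V, ‖w - (v : Y)‖ from by
      have := Submodule.starProjection_minimal (U := V) w
      rwa [Submodule.starProjection_apply] at this]
    exact h
  have hpyth : ‖w‖ ^ 2 = ‖P‖ ^ 2 + ‖w - P‖ ^ 2 := by
    have hperp : ⟪P, w - P⟫ = 0 := by
      have := Submodule.sub_starProjection_mem_orthogonal (K := V) w
      rw [Submodule.starProjection_apply] at this
      exact (Submodule.mem_orthogonal V (w - P)).mp this P
        (V.orthogonalProjectionOnto w).2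
    have : ‖P + (w - P)‖ ^ 2 = ‖P‖ ^ 2 + ‖w - P‖ ^ 2 := by
      rw [norm_add_sq_real, hperp]; ring
    simpa using this
  constructor
  · have h1 : (1 - δ ^ 2) * ‖w‖ ^ 2 ≤ ‖P‖ ^ 2 := by
      have hsq : ‖w - P‖ ^ 2 ≤ δ ^ 2 * ‖w‖ ^ 2 := by
        have := mul_self_le_mul_self (norm_nonneg _) hmin
        nlinarith [norm_nonneg (w - P), norm_nonneg w]
      nlinarith
    rcases le_or_gt (1 - δ ^ 2) 0 with hd | hd
    · have : Real.sqrt (1 - δ ^ 2) = 0 := Real.sqrt_eq_zero'.mpr hd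
      simp [this, norm_nonneg]
    · have : Real.sqrt ((1 - δ ^ 2) * ‖w‖ ^ 2) ≤ Real.sqrt (‖P‖ ^ 2) :=
        Real.sqrt_le_sqrt h1
      rwa [Real.sqrt_mul hd.le, Real.sqrt_sq (norm_nonneg w),
        Real.sqrt_sq (norm_nonneg P)] at this
  · nlinarith [norm_nonneg (w - P), norm_nonneg P, norm_nonneg w]

theorem statement11 {X Y : Type*}
    [NormedAddCommGroup X] [InnerProductSpace ℝ X] [CompleteSpace X]
    [NormedAddCommGroup Y] [InnerProductSpace ℝ Y] [CompleteSpace Y]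
    (B : X ≃L[ℝ] StrongDual ℝ Y)
    (V : Submodule ℝ Y) [V.HasOrthogonalProjection]
    (S : Set X) (δ : ℝ) (hδ0 : 0 ≤ δ) (hδ1 : δ < 1)
    (hprox : ∀ q ∈ S,
      (⨅ v : V, ‖(toDual ℝ Y).symm (B q) - (v : Y)‖) ≤ δ * ‖(toDual ℝ Y).symm (B q)‖) :
    (∀ q ∈ S,
      Real.sqrt (1 - δ ^ 2) * ‖B q‖
          ≤ ‖(V.orthogonalProjectionOnto ((toDual ℝ Y).symm (B q)) : Y)‖ ∧
      ‖(V.orthogonalProjectionOnto ((toDual ℝ Y).symm (B q)) : Y)‖ ≤ ‖B q‖) ∧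
    (∀ (f : StrongDual ℝ Y) (p : X), B.symm f - p ∈ S →
      Real.sqrt (1 - δ ^ 2) * ‖f - B p‖
          ≤ ‖(V.orthogonalProjectionOnto ((toDual ℝ Y).symm (f - B p)) : Y)‖ ∧
      ‖(V.orthogonalProjectionOnto ((toDual ℝ Y).symm (f - B p)) : Y)‖ ≤ ‖f - B p‖) := by
  have key : ∀ q ∈ S,
      Real.sqrt (1 - δ ^ 2) * ‖B q‖
          ≤ ‖(V.orthogonalProjectionOnto ((toDual ℝ Y).symm (B q)) : Y)‖ ∧
      ‖(V.orthogonalProjectionOnto ((toDual ℝ Y).symm (B q)) : Y)‖ ≤ ‖B q‖ := by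
    intro q hq
    have hnorm : ‖(toDual ℝ Y).symm (B q)‖ = ‖B q‖ :=
      (toDual ℝ Y).symm.norm_map (B q)
    have := core_lemma V δ hδ0 ((toDual ℝ Y).symm (B q)) (hprox q hq)
    rwa [hnorm] at this
  refine ⟨key, fun f p hfp => ?_⟩
  have hB : B (B.symm f - p) = f - B p := by
    simp [map_sub]
  have := key _ hfp
  rwa [hB] at this
end

section
/- Let 𝐁 ∈ ℝ^{m×n}, and let 𝐑_Y ∈ ℝ^{m×m}, 𝐑_X ∈ ℝ^{n×n} be symmetric positive definite with factorizations 𝐑_Y = 𝐋_Yᵀ𝐋_Y and 𝐑_X = 𝐋_Xᵀ𝐋_X. Then inf_{𝐪 ∈ ℝⁿ, 𝐪≠0} sup_{𝐯 ∈ ℝᵐ, 𝐯≠0} (𝐯ᵀ𝐁𝐪) / ((𝐯ᵀ𝐑_Y𝐯)^{1/2} (𝐪ᵀ𝐑_X𝐪)^{1/2}) equals the smallest singular value of the matrix 𝐃 := 𝐋_Y^{-T} 𝐁 𝐋_X^{-1}. -/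
open Matrix

namespace St13

lemma dot_transpose {m n : ℕ} (M : Matrix (Fin m) (Fin n) ℝ) (x : Fin n → ℝ) (y : Fin m → ℝ) :
    x ⬝ᵥ (Mᵀ *ᵥ y) = (M *ᵥ x) ⬝ᵥ y := by
  rw [Matrix.dotProduct_mulVec, Matrix.vecMul_transpose]

lemma dot_transpose' {m n : ℕ} (M : Matrix (Fin m) (Fin n) ℝ) (x : Fin m → ℝ) (y : Fin n → ℝ) :
    x ⬝ᵥ (M *ᵥ y) = (Mᵀ *ᵥ x) ⬝ᵥ y := by
  rw [← Matrix.transpose_transpose M, dot_transpose, Matrix.transpose_transpose]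

lemma dot_self_nonneg {m : ℕ} (v : Fin m → ℝ) : 0 ≤ v ⬝ᵥ v :=
  Finset.sum_nonneg fun _ _ => mul_self_nonneg _

lemma dot_self_pos {m : ℕ} {v : Fin m → ℝ} (hv : v ≠ 0) : 0 < v ⬝ᵥ v :=
  lt_of_le_of_ne (dot_self_nonneg v) fun h =>
    hv (dotProduct_self_eq_zero.mp h.symm)

lemma cs {m : ℕ} (w c : Fin m → ℝ) :
    w ⬝ᵥ c ≤ Real.sqrt (w ⬝ᵥ w) * Real.sqrt (c ⬝ᵥ c) := by
  simpa [dotProduct, pow_two] using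
    Real.sum_mul_le_sqrt_mul_sqrt Finset.univ w c

lemma sup_eq {m : ℕ} (hm : 0 < m) (L : Matrix (Fin m) (Fin m) ℝ) (hL : IsUnit L.det)
    (c : Fin m → ℝ) (d : ℝ) (hd : 0 < d) :
    (⨆ v : {v : Fin m → ℝ // v ≠ 0},
        ((L *ᵥ v.1) ⬝ᵥ c) / (Real.sqrt ((L *ᵥ v.1) ⬝ᵥ (L *ᵥ v.1)) * d))
      = Real.sqrt (c ⬝ᵥ c) / d := by
  have hne : Nonempty {v : Fin m → ℝ // v ≠ 0} :=
    ⟨⟨fun _ => 1, fun h => one_ne_zero (congr_fun h ⟨0, hm⟩)⟩⟩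
  have hub : ∀ v : {v : Fin m → ℝ // v ≠ 0},
      ((L *ᵥ v.1) ⬝ᵥ c) / (Real.sqrt ((L *ᵥ v.1) ⬝ᵥ (L *ᵥ v.1)) * d)
        ≤ Real.sqrt (c ⬝ᵥ c) / d := by
    intro v
    set w := L *ᵥ v.1 with hw
    rcases eq_or_ne w 0 with h0 | h0
    · rw [h0]
      simp only [zero_dotProduct, zero_div]
      positivity
    · have h1 : 0 < Real.sqrt (w ⬝ᵥ w) := Real.sqrt_pos.mpr (dot_self_pos h0)
      rw [div_le_div_iff₀ (by positivity) hd]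
      calc w ⬝ᵥ c * d ≤ (Real.sqrt (w ⬝ᵥ w) * Real.sqrt (c ⬝ᵥ c)) * d :=
            mul_le_mul_of_nonneg_right (cs w c) hd.le
        _ = Real.sqrt (c ⬝ᵥ c) * (Real.sqrt (w ⬝ᵥ w) * d) := by ring
  rcases eq_or_ne c 0 with hc | hc
  · have : ∀ v : {v : Fin m → ℝ // v ≠ 0},
        ((L *ᵥ v.1) ⬝ᵥ c) / (Real.sqrt ((L *ᵥ v.1) ⬝ᵥ (L *ᵥ v.1)) * d) = 0 := by
      intro v; rw [hc]; simp
    rw [iSup_congr this, ciSup_const, hc]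
    simp
  · obtain ⟨v0, hv0⟩ : ∃ v0 : Fin m → ℝ, L *ᵥ v0 = c :=
      ⟨L⁻¹ *ᵥ c, by rw [Matrix.mulVec_mulVec, Matrix.mul_nonsing_inv L hL, Matrix.one_mulVec]⟩
    have hv0ne : v0 ≠ 0 := by
      intro h; apply hc; rw [← hv0, h, Matrix.mulVec_zero]
    have hval : ((L *ᵥ v0) ⬝ᵥ c) / (Real.sqrt ((L *ᵥ v0) ⬝ᵥ (L *ᵥ v0)) * d)
        = Real.sqrt (c ⬝ᵥ c) / d := by
      rw [hv0]
      have h3 : 0 < Real.sqrt (c ⬝ᵥ c) := Real.sqrt_pos.mpr (dot_self_pos hc)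
      rw [div_eq_div_iff (by positivity) hd.ne', ← mul_assoc,
        Real.mul_self_sqrt (dot_self_nonneg c)]
    refine le_antisymm (ciSup_le hub) ?_
    calc Real.sqrt (c ⬝ᵥ c) / d = _ := hval.symm
      _ ≤ _ := le_ciSup ⟨Real.sqrt (c ⬝ᵥ c) / d, Set.forall_mem_range.mpr hub⟩ ⟨v0, hv0ne⟩

lemma rayleigh {n : ℕ} {A : Matrix (Fin n) (Fin n) ℝ} (hA : A.IsHermitian) {t : ℝ}
    (ht : ∀ i, t ≤ hA.eigenvalues i) (p : Fin n → ℝ) :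
    t * (p ⬝ᵥ p) ≤ p ⬝ᵥ A *ᵥ p := by
  set U : Matrix (Fin n) (Fin n) ℝ := (hA.eigenvectorUnitary : Matrix (Fin n) (Fin n) ℝ) with hU
  have hstar : star U = Uᵀ := by
    rw [Matrix.star_eq_conjTranspose, Matrix.conjTranspose_eq_transpose_of_trivial]
  have hUU : U * Uᵀ = 1 := by
    rw [← hstar]
    exact (Matrix.mem_unitaryGroup_iff).mp (hA.eigenvectorUnitary).2
  set y := Uᵀ *ᵥ p with hy
  have hAp : p ⬝ᵥ A *ᵥ p = ∑ i, y i * (hA.eigenvalues i * y i) := by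
    conv_lhs => rw [hA.spectral_theorem, Unitary.conjStarAlgAut_apply, hstar]
    rw [← Matrix.mulVec_mulVec, ← Matrix.mulVec_mulVec, dot_transpose' U]
    simp only [← hy, dotProduct]
    congr 1; ext i
    rw [Matrix.mulVec_diagonal]
    simp [RCLike.ofReal_real_eq_id]
  have hpp : p ⬝ᵥ p = ∑ i, y i * y i := by
    have : p ⬝ᵥ p = p ⬝ᵥ ((U * Uᵀ) *ᵥ p) := by rw [hUU, Matrix.one_mulVec]
    rw [this, ← Matrix.mulVec_mulVec, dot_transpose' U, ← hy, dotProduct]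
  rw [hAp, hpp, Finset.mul_sum]
  apply Finset.sum_le_sum
  intro i _
  nlinarith [mul_le_mul_of_nonneg_right (ht i) (mul_self_nonneg (y i))]

end St13

set_option maxHeartbeats 1000000 in
open St13 in
theorem statement13 {m n : ℕ}
    (B : Matrix (Fin m) (Fin n) ℝ)
    (RY : Matrix (Fin m) (Fin m) ℝ) (RX : Matrix (Fin n) (Fin n) ℝ)
    (hRY : RY.PosDef) (hRX : RX.PosDef)
    (LY : Matrix (Fin m) (Fin m) ℝ) (LX : Matrix (Fin n) (Fin n) ℝ)
    (hLY : IsUnit LY.det) (hLX : IsUnit LX.det)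
    (hfY : RY = LYᵀ * LY) (hfX : RX = LXᵀ * LX)
    (D : Matrix (Fin m) (Fin n) ℝ) (hD : D = (LY⁻¹)ᵀ * B * LX⁻¹)
    (hH : (Dᵀ * D).IsHermitian) :
    (⨅ q : {q : Fin n → ℝ // q ≠ 0}, ⨆ v : {v : Fin m → ℝ // v ≠ 0},
        (v.1 ⬝ᵥ B.mulVec q.1) /
          (Real.sqrt (v.1 ⬝ᵥ RY.mulVec v.1) * Real.sqrt (q.1 ⬝ᵥ RX.mulVec q.1)))
      = Real.sqrt (⨅ i, hH.eigenvalues i) := by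
  rcases Nat.eq_zero_or_pos n with hn | hn
  · subst hn
    haveI : IsEmpty {q : Fin 0 → ℝ // q ≠ 0} :=
      ⟨fun q => q.2 (funext fun i => i.elim0)⟩
    rw [Real.iInf_of_isEmpty, Real.iInf_of_isEmpty, Real.sqrt_zero]
  · haveI : Nonempty (Fin n) := Fin.pos_iff_nonempty.mp hn
    -- B in terms of D
    have hdetLYT : IsUnit LYᵀ.det := by rwa [Matrix.det_transpose]
    have hB : LYᵀ * (D * LX) = B := by
      rw [hD, Matrix.transpose_nonsing_inv]
      simp only [Matrix.mul_assoc]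
      rw [Matrix.nonsing_inv_mul LX hLX, Matrix.mul_one, ← Matrix.mul_assoc,
        Matrix.mul_nonsing_inv LYᵀ hdetLYT, Matrix.one_mul]
    -- eigenvalue minimizer
    obtain ⟨i0, hi0⟩ := Finite.exists_min hH.eigenvalues
    have hinfeig : (⨅ i, hH.eigenvalues i) = hH.eigenvalues i0 :=
      le_antisymm (ciInf_le (Set.finite_range _).bddBelow i0) (le_ciInf hi0)
    set u : Fin n → ℝ := ⇑(hH.eigenvectorBasis i0) with hu
    have hAu : (Dᵀ * D) *ᵥ u = hH.eigenvalues i0 • u := hH.mulVec_eigenvectorBasis i0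
    have hune : u ≠ 0 := by
      have h1 := hH.eigenvectorBasis.orthonormal.ne_zero i0
      intro h
      exact h1 (by ext i; exact congr_fun h i)
    haveI : Nonempty {q : Fin n → ℝ // q ≠ 0} :=
      ⟨⟨fun _ => 1, fun h => one_ne_zero (congr_fun h (Classical.arbitrary _))⟩⟩
    have key : ∀ p : Fin n → ℝ, (D *ᵥ p) ⬝ᵥ (D *ᵥ p) = p ⬝ᵥ (Dᵀ * D) *ᵥ p := by
      intro p
      rw [← Matrix.mulVec_mulVec, dot_transpose]
    have hdotu : u ⬝ᵥ (Dᵀ * D) *ᵥ u = hH.eigenvalues i0 * (u ⬝ᵥ u) := by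
      rw [hAu, dotProduct_smul, smul_eq_mul]
    have huu : 0 < u ⬝ᵥ u := dot_self_pos hune
    have hl0 : 0 ≤ hH.eigenvalues i0 := by
      have h1 : 0 ≤ u ⬝ᵥ (Dᵀ * D) *ᵥ u := by rw [← key u]; exact dot_self_nonneg _
      rw [hdotu] at h1
      nlinarith
    rcases Nat.eq_zero_or_pos m with hm | hm
    · subst hm
      haveI : IsEmpty {v : Fin 0 → ℝ // v ≠ 0} :=
        ⟨fun v => v.2 (funext fun i => i.elim0)⟩
      have h0 : ∀ q : {q : Fin n → ℝ // q ≠ 0},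
          (⨆ v : {v : Fin 0 → ℝ // v ≠ 0},
            (v.1 ⬝ᵥ B.mulVec q.1) /
              (Real.sqrt (v.1 ⬝ᵥ RY.mulVec v.1) * Real.sqrt (q.1 ⬝ᵥ RX.mulVec q.1))) = 0 :=
        fun q => Real.iSup_of_isEmpty _
      rw [iInf_congr h0, ciInf_const, hinfeig]
      have : hH.eigenvalues i0 = 0 := by
        have h2 : (D *ᵥ u) ⬝ᵥ (D *ᵥ u) = 0 := by
          simp [dotProduct]
        rw [key, hdotu] at h2
        nlinarith
      rw [this, Real.sqrt_zero]
    · -- main case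
      have hinner : ∀ q : {q : Fin n → ℝ // q ≠ 0},
          (⨆ v : {v : Fin m → ℝ // v ≠ 0},
            (v.1 ⬝ᵥ B.mulVec q.1) /
              (Real.sqrt (v.1 ⬝ᵥ RY.mulVec v.1) * Real.sqrt (q.1 ⬝ᵥ RX.mulVec q.1)))
          = Real.sqrt ((D *ᵥ (LX *ᵥ q.1)) ⬝ᵥ (D *ᵥ (LX *ᵥ q.1)))
              / Real.sqrt ((LX *ᵥ q.1) ⬝ᵥ (LX *ᵥ q.1)) := by
        intro q
        have hq : LX *ᵥ q.1 ≠ 0 := by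
          intro h
          apply q.2
          have : LX⁻¹ *ᵥ (LX *ᵥ q.1) = q.1 := by
            rw [Matrix.mulVec_mulVec, Matrix.nonsing_inv_mul LX hLX, Matrix.one_mulVec]
          rw [← this, h, Matrix.mulVec_zero]
        have hd : 0 < Real.sqrt ((LX *ᵥ q.1) ⬝ᵥ (LX *ᵥ q.1)) :=
          Real.sqrt_pos.mpr (dot_self_pos hq)
        rw [← sup_eq hm LY hLY (D *ᵥ (LX *ᵥ q.1)) _ hd]
        refine iSup_congr fun v => ?_
        have hnum : v.1 ⬝ᵥ B.mulVec q.1 = (LY *ᵥ v.1) ⬝ᵥ (D *ᵥ (LX *ᵥ q.1)) := by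
          rw [← hB, ← Matrix.mulVec_mulVec, dot_transpose, ← Matrix.mulVec_mulVec]
        have hdenY : v.1 ⬝ᵥ RY.mulVec v.1 = (LY *ᵥ v.1) ⬝ᵥ (LY *ᵥ v.1) := by
          rw [show RY.mulVec v.1 = RY *ᵥ v.1 from rfl, hfY, ← Matrix.mulVec_mulVec,
            dot_transpose]
        have hdenX : q.1 ⬝ᵥ RX.mulVec q.1 = (LX *ᵥ q.1) ⬝ᵥ (LX *ᵥ q.1) := by
          rw [show RX.mulVec q.1 = RX *ᵥ q.1 from rfl, hfX, ← Matrix.mulVec_mulVec,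
            dot_transpose]
        rw [hnum, hdenY, hdenX]
      rw [iInf_congr hinner, hinfeig]
      have hlb : ∀ q : {q : Fin n → ℝ // q ≠ 0},
          Real.sqrt (hH.eigenvalues i0)
            ≤ Real.sqrt ((D *ᵥ (LX *ᵥ q.1)) ⬝ᵥ (D *ᵥ (LX *ᵥ q.1)))
              / Real.sqrt ((LX *ᵥ q.1) ⬝ᵥ (LX *ᵥ q.1)) := by
        intro q
        set p := LX *ᵥ q.1 with hp
        have hpne : p ≠ 0 := by
          intro h
          apply q.2
          have : LX⁻¹ *ᵥ (LX *ᵥ q.1) = q.1 := by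
            rw [Matrix.mulVec_mulVec, Matrix.nonsing_inv_mul LX hLX, Matrix.one_mulVec]
          rw [← this, ← hp, h, Matrix.mulVec_zero]
        rw [le_div_iff₀ (Real.sqrt_pos.mpr (dot_self_pos hpne)), ← Real.sqrt_mul hl0]
        apply Real.sqrt_le_sqrt
        rw [key p]
        exact rayleigh hH hi0 p
      refine le_antisymm ?_ (le_ciInf hlb)
      have hq0 : LX *ᵥ (LX⁻¹ *ᵥ u) = u := by
        rw [Matrix.mulVec_mulVec, Matrix.mul_nonsing_inv LX hLX, Matrix.one_mulVec]
      have hq0ne : LX⁻¹ *ᵥ u ≠ 0 := by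
        intro h; apply hune; rw [← hq0, h, Matrix.mulVec_zero]
      have hval : Real.sqrt ((D *ᵥ (LX *ᵥ (LX⁻¹ *ᵥ u))) ⬝ᵥ (D *ᵥ (LX *ᵥ (LX⁻¹ *ᵥ u))))
          / Real.sqrt ((LX *ᵥ (LX⁻¹ *ᵥ u)) ⬝ᵥ (LX *ᵥ (LX⁻¹ *ᵥ u)))
          = Real.sqrt (hH.eigenvalues i0) := by
        rw [hq0, key u, hdotu, Real.sqrt_mul hl0,
          mul_div_assoc, div_self (Real.sqrt_pos.mpr huu).ne', mul_one]
      have hbdd : BddBelow (Set.range fun q : {q : Fin n → ℝ // q ≠ 0} =>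
          Real.sqrt ((D *ᵥ (LX *ᵥ q.1)) ⬝ᵥ (D *ᵥ (LX *ᵥ q.1)))
            / Real.sqrt ((LX *ᵥ q.1) ⬝ᵥ (LX *ᵥ q.1))) := by
        refine ⟨0, ?_⟩
        rintro x ⟨q, rfl⟩
        positivity
      have hle := ciInf_le hbdd (⟨LX⁻¹ *ᵥ u, hq0ne⟩ : {q : Fin n → ℝ // q ≠ 0})
      exact hle.trans (le_of_eq hval)
end

section
/- Let X, Y be Hilbert spaces, B_μ : X → Y' an isomorphism, p(μ) := B_μ⁻¹f, and endow X with the norm ‖·‖_X (equivalent to ‖·‖_X̂μ). Let X_n, X̄ ⊆ X and Ȳ ⊆ Y be closed subspaces. Assume: (i) Ȳ is δ-proximal for X_n + X̄, i.e. inf_{v̄∈Ȳ} ‖w − R_X⁻¹B_μ* v̄‖_X ≤ δ‖w‖_X for all w ∈ X_n + X̄ with δ ∈ [0,1); and (ii) ‖p(μ) − p̄ⁿ(μ)‖_X ≤ ξ ‖p(μ) − pⁿ(μ)‖_X for some ξ ∈ [0,1), where pⁿ(μ), p̄ⁿ(μ) are the best approximations to p(μ) from X_n and X_n + X̄ respectively.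 Then for every p ∈ X_n: inf_{v̄∈Ȳ} ‖p(μ) − p − R_X⁻¹B_μ* v̄‖_X ≤ ((1+δ)ξ + δ) ‖p(μ) − p‖_X. -/
open InnerProductSpace NormedSpace RealInnerProductSpace

theorem statement16 {X Y : Type*}
    [NormedAddCommGroup X] [InnerProductSpace ℝ X] [CompleteSpace X]
    [NormedAddCommGroup Y] [InnerProductSpace ℝ Y] [CompleteSpace Y]
    (B : X ≃L[ℝ] StrongDual ℝ Y) (f : StrongDual ℝ Y)
    (Xn Xb : Submodule ℝ X) (Yb : Submodule ℝ Y)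
    [Submodule.HasOrthogonalProjection Xn] [Submodule.HasOrthogonalProjection (Xn ⊔ Xb)]
    (δ ξ : ℝ) (hδ0 : 0 ≤ δ) (hδ1 : δ < 1) (hξ0 : 0 ≤ ξ) (hξ1 : ξ < 1)
    (hprox : ∀ w ∈ Xn ⊔ Xb,
      (⨅ v : Yb, ‖w - (toDual ℝ X).symm
          ((B.toContinuousLinearMap : X →L[ℝ] Y →L[ℝ] ℝ).flip (v : Y))‖) ≤ δ * ‖w‖)
    (happrox : ‖B.symm f - (Submodule.orthogonalProjectionOnto (Xn ⊔ Xb) (B.symm f) : X)‖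
        ≤ ξ * ‖B.symm f - (Submodule.orthogonalProjectionOnto Xn (B.symm f) : X)‖) :
    ∀ p ∈ Xn,
      (⨅ v : Yb, ‖B.symm f - p - (toDual ℝ X).symm
          ((B.toContinuousLinearMap : X →L[ℝ] Y →L[ℝ] ℝ).flip (v : Y))‖)
        ≤ ((1 + δ) * ξ + δ) * ‖B.symm f - p‖ := by
  intro p hp
  set pμ := B.symm f with hpμ
  set g : Yb → X := fun v => (toDual ℝ X).symm
      ((B.toContinuousLinearMap : X →L[ℝ] Y →L[ℝ] ℝ).flip (v : Y)) with hg
  set pb : X := (Submodule.orthogonalProjectionOnto (Xn ⊔ Xb) pμ : X) with hpb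
  set pn : X := (Submodule.orthogonalProjectionOnto Xn pμ : X) with hpn
  set w : X := pb - p with hw
  have hwmem : w ∈ Xn ⊔ Xb :=
    Submodule.sub_mem _ (Submodule.orthogonalProjectionOnto (Xn ⊔ Xb) pμ).2
      (Submodule.mem_sup_left hp)
  have hbdd1 : BddBelow (Set.range fun v : Yb => ‖pμ - p - g v‖) :=
    ⟨0, by rintro x ⟨v, rfl⟩; positivity⟩
  have hbdd2 : BddBelow (Set.range fun v : Yb => ‖w - g v‖) :=
    ⟨0, by rintro x ⟨v, rfl⟩; positivity⟩
  -- best approximation property of orthogonal projection onto Xn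
  have hpn_le : ‖pμ - pn‖ ≤ ‖pμ - p‖ := by
    rw [hpn, ← Submodule.starProjection_apply, Submodule.starProjection_minimal]
    exact ciInf_le ⟨0, by rintro x ⟨v, rfl⟩; positivity⟩ (⟨p, hp⟩ : Xn)
  have hpb_le : ‖pμ - pb‖ ≤ ξ * ‖pμ - p‖ :=
    happrox.trans (by nlinarith)
  -- inf bound
  have key : (⨅ v : Yb, ‖pμ - p - g v‖) ≤ ‖pμ - pb‖ + ⨅ v : Yb, ‖w - g v‖ := by
    have h1 : (⨅ v : Yb, ‖pμ - p - g v‖) - ‖pμ - pb‖ ≤ ⨅ v : Yb, ‖w - g v‖ := by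
      refine le_ciInf fun v => ?_
      have h2 : (⨅ v : Yb, ‖pμ - p - g v‖) ≤ ‖pμ - p - g v‖ := ciInf_le hbdd1 v
      have h3 : ‖pμ - p - g v‖ ≤ ‖pμ - pb‖ + ‖w - g v‖ := by
        have : pμ - p - g v = (pμ - pb) + (w - g v) := by rw [hw]; abel
        rw [this]; exact norm_add_le _ _
      linarith
    linarith
  have hprox' := hprox w hwmem
  have hwnorm : ‖w‖ ≤ ‖pμ - pb‖ + ‖pμ - p‖ := by
    have : w = -(pμ - pb) + (pμ - p) := by rw [hw]; abel
    rw [this]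
    exact (norm_add_le _ _).trans_eq (by rw [norm_neg])
  have hnn : (0:ℝ) ≤ ‖pμ - p‖ := norm_nonneg _
  calc (⨅ v : Yb, ‖pμ - p - g v‖) ≤ ‖pμ - pb‖ + ⨅ v : Yb, ‖w - g v‖ := key
    _ ≤ ‖pμ - pb‖ + δ * ‖w‖ := by linarith
    _ ≤ ((1 + δ) * ξ + δ) * ‖pμ - p‖ := by nlinarith
end
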